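/- arXiv:1712.07935 — 4 statements merged into one kernel-verified Lean document; each statement's English description precedes it below -/
import Mathlib

section
/- Let R be a commutative ring and let u, v, w, r be positive natural numbers. If u×v by v×w matrix multiplication over R admits a bilinear algorithm with r multiplications, then w×u by u×v matrix multiplication over R also admits a bilinear algorithm with r multiplications (cyclic symmetry of the matrix multiplication tensor: ⟨u,v,w⟩ = ⟨w,u,v⟩). -/
/-! A bilinear algorithm for `⟨u,v,w⟩` is the same thing as a decomposition of the trilinear form
`(A, B, D) ↦ tr (A B D)` into `r` products of linear functionals, because the trace pairing is
nondegenerate: `M k l = tr (M E_{lk})`. Cyclicity of the trace, `tr (A B D) = tr (D A B)`, then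
rotates such a decomposition into one for `⟨w,u,v⟩`. -/

/-- A bilinear (non-commutative) algorithm computing `u×v` by `v×w` matrix
multiplication over `R` with `r` multiplications: there are `R`-linear
functionals `f i` on `u×v` matrices, `R`-linear functionals `g i` on `v×w`
matrices, and `u×w` matrices `C i` such that `A * B = ∑ i, f i A * g i B • C i`
for all `A`, `B`. -/
def BilinearAlgorithm (R : Type*) [CommRing R] (u v w r : ℕ) : Prop :=
  ∃ (f : Fin r → (Matrix (Fin u) (Fin v) R →ₗ[R] R))
    (g : Fin r → (Matrix (Fin v) (Fin w) R →ₗ[R] R))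
    (C : Fin r → Matrix (Fin u) (Fin w) R),
    ∀ (A : Matrix (Fin u) (Fin v) R) (B : Matrix (Fin v) (Fin w) R),
      A * B = ∑ i, (f i A * g i B) • C i

open Matrix

theorem Matrix.trace_mul_single_one {R : Type*} [NonAssocSemiring R]
    {m n : Type*} [Fintype m] [Fintype n] [DecidableEq m] [DecidableEq n]
    (M : Matrix m n R) (i : n) (j : m) : (M * single i j (1 : R)).trace = M j i := by
  simp [trace_mul_single]

theorem bilinearAlgorithm_iff_trace_mul_mul (R : Type*) [CommRing R] (u v w r : ℕ) :
    BilinearAlgorithm R u v w r ↔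
      ∃ (f : Fin r → (Matrix (Fin u) (Fin v) R →ₗ[R] R))
        (g : Fin r → (Matrix (Fin v) (Fin w) R →ₗ[R] R))
        (h : Fin r → (Matrix (Fin w) (Fin u) R →ₗ[R] R)),
        ∀ (A : Matrix (Fin u) (Fin v) R) (B : Matrix (Fin v) (Fin w) R)
          (D : Matrix (Fin w) (Fin u) R),
          (A * B * D).trace = ∑ i, f i A * g i B * h i D := by
  constructor
  · rintro ⟨f, g, C, hC⟩
    refine ⟨f, g, fun i => traceLinearMap (Fin u) R R ∘ₗ mulLeftLinearMap (Fin u) R (C i), ?_⟩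
    intro A B D
    simp [hC, Matrix.sum_mul, trace_sum, Matrix.smul_mul, trace_smul]
  · rintro ⟨f, g, h, hfgh⟩
    refine ⟨f, g, fun i => Matrix.of fun k l => h i (single l k 1), fun A B => ?_⟩
    ext k l
    rw [← trace_mul_single_one (A * B) l k, hfgh]
    simp [Matrix.sum_apply, mul_assoc]

theorem bilinearAlgorithm_cyclic_general (R : Type*) [CommRing R] (u v w r : ℕ)
    (h : BilinearAlgorithm R u v w r) : BilinearAlgorithm R w u v r := by
  obtain ⟨f, g, k, hfgk⟩ := (bilinearAlgorithm_iff_trace_mul_mul R u v w r).mp h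
  refine (bilinearAlgorithm_iff_trace_mul_mul R w u v r).mpr ⟨k, f, g, fun D A B => ?_⟩
  rw [← trace_mul_cycle, hfgk]
  exact Finset.sum_congr rfl fun i _ => by ring

/-- Cyclic symmetry of the matrix multiplication tensor: ⟨u,v,w⟩ = ⟨w,u,v⟩. -/
theorem bilinearAlgorithm_cyclic (R : Type*) [CommRing R] (u v w r : ℕ)
    (hu : 0 < u) (hv : 0 < v) (hw : 0 < w) (hr : 0 < r)
    (h : BilinearAlgorithm R u v w r) : BilinearAlgorithm R w u v r :=
  bilinearAlgorithm_cyclic_general R u v w r h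
end

section
/- (Strassen's trilinear block identity) Let R be a commutative ring, let n be a positive natural number, and let N, M, P be 2n×2n matrices over R, written in 2×2 block form with n×n blocks N_{ij}, M_{ij}, P_{ij} (i,j ∈ {1,2}). Then Trace(N·M·P) = Trace((N₁₁+N₂₂)·(M₁₁+M₂₂)·(P₁₁+P₂₂)) + Trace((N₁₂−N₂₂)·(M₂₁+M₂₂)·P₁₁) + Trace((N₂₁−N₁₁)·(M₁₁+M₁₂)·P₂₂) + Trace((N₁₁+N₁₂)·M₂₂·(P₂₁−P₁₁)) + Trace(N₁₁·(M₁₂−M₂₂)·(P₂₁+P₂₂)) + Trace(N₂₂·(M₂₁−M₁₁)·(P₁₁+P₁₂)) + Trace((N₂₁+N₂₂)·M₁₁·(P₁₂−P₂₂)). -/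
open Matrix

theorem Matrix.trace_fromBlocks {m n α : Type*} [Fintype m] [Fintype n] [AddCommMonoid α]
    (A : Matrix m m α) (B : Matrix m n α) (C : Matrix n m α) (D : Matrix n n α) :
    (fromBlocks A B C D).trace = A.trace + D.trace :=
  Fintype.sum_sum_type _

theorem strassen_trilinear_block_identity_general (R : Type*) [CommRing R] (n : ℕ)
    (N₁₁ N₁₂ N₂₁ N₂₂ M₁₁ M₁₂ M₂₁ M₂₂ P₁₁ P₁₂ P₂₁ P₂₂ : Matrix (Fin n) (Fin n) R) :
    (Matrix.fromBlocks N₁₁ N₁₂ N₂₁ N₂₂ * Matrix.fromBlocks M₁₁ M₁₂ M₂₁ M₂₂ *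
        Matrix.fromBlocks P₁₁ P₁₂ P₂₁ P₂₂).trace =
      ((N₁₁ + N₂₂) * (M₁₁ + M₂₂) * (P₁₁ + P₂₂)).trace +
      ((N₁₂ - N₂₂) * (M₂₁ + M₂₂) * P₁₁).trace +
      ((N₂₁ - N₁₁) * (M₁₁ + M₁₂) * P₂₂).trace +
      ((N₁₁ + N₁₂) * M₂₂ * (P₂₁ - P₁₁)).trace +
      (N₁₁ * (M₁₂ - M₂₂) * (P₂₁ + P₂₂)).trace +
      (N₂₂ * (M₂₁ - M₁₁) * (P₁₁ + P₁₂)).trace +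
      ((N₂₁ + N₂₂) * M₁₁ * (P₁₂ - P₂₂)).trace := by
  rw [fromBlocks_multiply, fromBlocks_multiply, trace_fromBlocks]
  simp only [add_mul, mul_add, sub_mul, mul_sub, trace_add, trace_sub]
  -- Every term is now the trace of a block word `N_ij * M_jk * P_kl`; Strassen's seven
  -- products cancel additively down to the eight words of the left-hand side.
  abel

/-- Strassen's trilinear block identity: for `2n×2n` matrices `N`, `M`, `P`
written in `2×2` block form with `n×n` blocks,
`Trace(N·M·P)` decomposes into the seven block traces of Strassen's scheme. -/
theorem strassen_trilinear_block_identity (R : Type*) [CommRing R] (n : ℕ) (hn : 0 < n)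
    (N₁₁ N₁₂ N₂₁ N₂₂ M₁₁ M₁₂ M₂₁ M₂₂ P₁₁ P₁₂ P₂₁ P₂₂ : Matrix (Fin n) (Fin n) R) :
    (Matrix.fromBlocks N₁₁ N₁₂ N₂₁ N₂₂ * Matrix.fromBlocks M₁₁ M₁₂ M₂₁ M₂₂ *
        Matrix.fromBlocks P₁₁ P₁₂ P₂₁ P₂₂).trace =
      ((N₁₁ + N₂₂) * (M₁₁ + M₂₂) * (P₁₁ + P₂₂)).trace +
      ((N₁₂ - N₂₂) * (M₂₁ + M₂₂) * P₁₁).trace +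
      ((N₂₁ - N₁₁) * (M₁₁ + M₁₂) * P₂₂).trace +
      ((N₁₁ + N₁₂) * M₂₂ * (P₂₁ - P₁₁)).trace +
      (N₁₁ * (M₁₂ - M₂₂) * (P₂₁ + P₂₂)).trace +
      (N₂₂ * (M₂₁ - M₁₁) * (P₁₁ + P₁₂)).trace +
      ((N₂₁ + N₂₂) * M₁₁ * (P₁₂ - P₂₂)).trace :=
  strassen_trilinear_block_identity_general R n N₁₁ N₁₂ N₂₁ N₂₂ M₁₁ M₁₂ M₂₁ M₂₂ P₁₁ P₁₂ P₂₁ P₂₂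
end

section
/- (Proposition 1, divide-and-conquer bound) Let R be a commutative ring and let u > v be positive natural numbers. If u×u by u×u matrix multiplication over R admits a bilinear algorithm with a multiplications, u×u by u×v matrix multiplication over R admits a bilinear algorithm with b multiplications, and v×v by v×u matrix multiplication over R admits a bilinear algorithm with c multiplications, then (u+v)×(u+v) by (u+v)×(u+v) matrix multiplication over R admits a bilinear algorithm with a + 3b + 3c multiplications; in particular ⟨u+v,u+v,u+v⟩ ≤ ⟨u,u,u⟩ + 3⟨u,u,v⟩ + 3⟨v,v,u⟩. -/
open Matrix

def HasBilinearAlgorithm (R : Type*) [CommSemiring R] {M N P : Type*}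
    [AddCommMonoid M] [Module R M] [AddCommMonoid N] [Module R N] [AddCommMonoid P] [Module R P]
    (ι : Type*) [Fintype ι] (F : M → N → P) : Prop :=
  ∃ (f : ι → M →ₗ[R] R) (g : ι → N →ₗ[R] R) (C : ι → P),
    ∀ x y, F x y = ∑ i, (f i x * g i y) • C i

theorem bilinearAlgorithm_iff {R : Type*} [CommRing R] {u v w r : ℕ} :
    BilinearAlgorithm R u v w r ↔ HasBilinearAlgorithm R (Fin r)
      fun (A : Matrix (Fin u) (Fin v) R) (B : Matrix (Fin v) (Fin w) R) => A * B :=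
  Iff.rfl

namespace HasBilinearAlgorithm

variable {R : Type*} [CommSemiring R] {ι κ : Type*} [Fintype ι] [Fintype κ]

section Bilinear

variable {M N P : Type*} [AddCommMonoid M] [Module R M] [AddCommMonoid N] [Module R N]
  [AddCommMonoid P] [Module R P] {F G : M → N → P}

theorem congr (h : HasBilinearAlgorithm R ι F) (hGF : ∀ x y, G x y = F x y) :
    HasBilinearAlgorithm R ι G :=
  funext₂ hGF ▸ h

theorem equiv (h : HasBilinearAlgorithm R ι F) (e : κ ≃ ι) : HasBilinearAlgorithm R κ F := by
  obtain ⟨f, g, C, hF⟩ := h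
  exact ⟨f ∘ e, g ∘ e, C ∘ e, fun x y => (hF x y).trans (e.sum_comp _).symm⟩

theorem add (hF : HasBilinearAlgorithm R ι F) (hG : HasBilinearAlgorithm R κ G) :
    HasBilinearAlgorithm R (ι ⊕ κ) (fun x y => F x y + G x y) := by
  obtain ⟨f, g, C, hF⟩ := hF
  obtain ⟨f', g', C', hG⟩ := hG
  exact ⟨Sum.elim f f', Sum.elim g g', Sum.elim C C', fun x y => by
    simp only [Fintype.sum_sum_type, Sum.elim_inl, Sum.elim_inr, hF, hG]⟩

theorem comp {M' N' P' : Type*} [AddCommMonoid M'] [Module R M'] [AddCommMonoid N'] [Module R N']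
    [AddCommMonoid P'] [Module R P'] (h : HasBilinearAlgorithm R ι F)
    (φ : M' →ₗ[R] M) (ψ : N' →ₗ[R] N) (Θ : P →ₗ[R] P') :
    HasBilinearAlgorithm R ι (fun x y => Θ (F (φ x) (ψ y))) := by
  obtain ⟨f, g, C, hF⟩ := h
  exact ⟨fun i => f i ∘ₗ φ, fun i => g i ∘ₗ ψ, fun i => Θ (C i), fun x y => by
    simp only [hF, map_sum, map_smul, LinearMap.comp_apply]⟩

end Bilinear

section MatrixMul

variable {l m n : Type*} [Fintype m]

theorem matrixMul_reindex {l' m' n' : Type*} [Fintype m']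
    (h : HasBilinearAlgorithm R ι fun (A : Matrix l m R) (B : Matrix m n R) => A * B)
    (eₗ : l ≃ l') (eₘ : m ≃ m') (eₙ : n ≃ n') :
    HasBilinearAlgorithm R ι fun (A : Matrix l' m' R) (B : Matrix m' n' R) => A * B :=
  (h.comp (reindexLinearEquiv R R eₗ.symm eₘ.symm).toLinearMap
      (reindexLinearEquiv R R eₘ.symm eₙ.symm).toLinearMap
      (reindexLinearEquiv R R eₗ eₙ).toLinearMap).congr fun A B => by
    simp

theorem matrixMul_rotate [Fintype l] [Fintype n]
    (h : HasBilinearAlgorithm R ι fun (A : Matrix l m R) (B : Matrix m n R) => A * B) :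
    HasBilinearAlgorithm R ι fun (A : Matrix m n R) (B : Matrix n l R) => A * B := by
  classical
  obtain ⟨f, g, C, hAB⟩ := h
  refine ⟨g, fun i => traceLinearMap l R R ∘ₗ mulLeftLinearMap l R (C i),
    fun i => of fun p q => f i (single q p 1), fun X Y => ?_⟩
  ext p q
  have hpq := congrArg (fun Z => (Z * Y).trace) (hAB (single q p 1) X)
  simp only [Matrix.mul_assoc, trace_single_mul, one_smul, Matrix.sum_mul, trace_sum, smul_mul,
    trace_smul] at hpq
  simp only [hpq, Matrix.sum_apply, Matrix.smul_apply, of_apply, LinearMap.comp_apply,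
    traceLinearMap_apply, mulLeftLinearMap_apply, smul_eq_mul]
  exact Finset.sum_congr rfl fun i _ => by ring

end MatrixMul

end HasBilinearAlgorithm

namespace Matrix

variable {R : Type*} [Semiring R] {α β γ δ : Type*}

@[simps]
def toBlocks₁₁LinearMap : Matrix (α ⊕ β) (γ ⊕ δ) R →ₗ[R] Matrix α γ R where
  toFun := toBlocks₁₁
  map_add' _ _ := rfl
  map_smul' _ _ := rfl

@[simps]
def toBlocks₁₂LinearMap : Matrix (α ⊕ β) (γ ⊕ δ) R →ₗ[R] Matrix α δ R where
  toFun := toBlocks₁₂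
  map_add' _ _ := rfl
  map_smul' _ _ := rfl

@[simps]
def toBlocks₂₁LinearMap : Matrix (α ⊕ β) (γ ⊕ δ) R →ₗ[R] Matrix β γ R where
  toFun := toBlocks₂₁
  map_add' _ _ := rfl
  map_smul' _ _ := rfl

@[simps]
def toBlocks₂₂LinearMap : Matrix (α ⊕ β) (γ ⊕ δ) R →ₗ[R] Matrix β δ R where
  toFun := toBlocks₂₂
  map_add' _ _ := rfl
  map_smul' _ _ := rfl

@[simps]
def fromBlocksLinearMap {M : Type*} [AddCommMonoid M] [Module R M]
    (L₁₁ : M →ₗ[R] Matrix α γ R) (L₁₂ : M →ₗ[R] Matrix α δ R)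
    (L₂₁ : M →ₗ[R] Matrix β γ R) (L₂₂ : M →ₗ[R] Matrix β δ R) :
    M →ₗ[R] Matrix (α ⊕ β) (γ ⊕ δ) R where
  toFun x := fromBlocks (L₁₁ x) (L₁₂ x) (L₂₁ x) (L₂₂ x)
  map_add' x y := by simp only [map_add, fromBlocks_add]
  map_smul' c x := by simp only [map_smul, fromBlocks_smul, RingHom.id_apply]

theorem exists_transpose_mul_eq_one [Fintype α] [DecidableEq β] (e : β ↪ α) :
    ∃ J : Matrix α β R, Jᵀ * J = 1 := by
  classical
  refine ⟨(1 : Matrix α α R).submatrix id e, ?_⟩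
  rw [transpose_submatrix, transpose_one, ← submatrix_mul _ _ _ _ _ Function.bijective_id,
    Matrix.mul_one, submatrix_one_embedding]

end Matrix

namespace DivideAndConquer

variable {R : Type*} [CommRing R] {α β : Type*} [Fintype α] [Fintype β] (J : Matrix α β R)

def P : Matrix (α ⊕ β) (α ⊕ β) R →ₗ[R] Matrix α α R :=
  toBlocks₁₁LinearMap + mulLeftLinearMap α R J ∘ₗ mulRightLinearMap β R Jᵀ ∘ₗ toBlocks₂₂LinearMap

def Q : Matrix (α ⊕ β) (α ⊕ β) R →ₗ[R] Matrix β α R :=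
  toBlocks₂₁LinearMap + mulRightLinearMap β R Jᵀ ∘ₗ toBlocks₂₂LinearMap

def S : Matrix (α ⊕ β) (α ⊕ β) R →ₗ[R] Matrix α β R :=
  toBlocks₁₂LinearMap - mulLeftLinearMap β R J ∘ₗ toBlocks₂₂LinearMap

def T : Matrix (α ⊕ β) (α ⊕ β) R →ₗ[R] Matrix β α R :=
  toBlocks₂₁LinearMap - mulLeftLinearMap α R Jᵀ ∘ₗ toBlocks₁₁LinearMap

def U : Matrix (α ⊕ β) (α ⊕ β) R →ₗ[R] Matrix α β R :=
  mulRightLinearMap α R J ∘ₗ toBlocks₁₁LinearMap + toBlocks₁₂LinearMap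

def Θ₁ : Matrix α α R →ₗ[R] Matrix (α ⊕ β) (α ⊕ β) R :=
  fromBlocksLinearMap LinearMap.id 0 0 (mulLeftLinearMap β R Jᵀ ∘ₗ mulRightLinearMap α R J)

def Θ₂ : Matrix β α R →ₗ[R] Matrix (α ⊕ β) (α ⊕ β) R :=
  fromBlocksLinearMap 0 0 LinearMap.id (-mulRightLinearMap β R J)

def Θ₃ : Matrix α β R →ₗ[R] Matrix (α ⊕ β) (α ⊕ β) R :=
  fromBlocksLinearMap 0 LinearMap.id 0 (mulLeftLinearMap β R Jᵀ)

def Θ₄ : Matrix β α R →ₗ[R] Matrix (α ⊕ β) (α ⊕ β) R :=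
  fromBlocksLinearMap (mulLeftLinearMap α R J) 0 LinearMap.id 0

def Θ₅ : Matrix α β R →ₗ[R] Matrix (α ⊕ β) (α ⊕ β) R :=
  fromBlocksLinearMap (-mulRightLinearMap α R Jᵀ) LinearMap.id 0 0

def Θ₆ : Matrix β β R →ₗ[R] Matrix (α ⊕ β) (α ⊕ β) R :=
  fromBlocksLinearMap 0 0 0 LinearMap.id

def Θ₇ : Matrix α α R →ₗ[R] Matrix (α ⊕ β) (α ⊕ β) R :=
  fromBlocksLinearMap LinearMap.id 0 0 0

variable {J} [DecidableEq β]

theorem mul_eq_sum_sevenProducts (hJ : Jᵀ * J = 1) (A B : Matrix (α ⊕ β) (α ⊕ β) R) :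
    A * B = Θ₁ J (P J A * P J B) + Θ₂ J (Q J A * toBlocks₁₁LinearMap B)
      + Θ₃ J (toBlocks₁₁LinearMap A * S J B) + Θ₄ J (toBlocks₂₂LinearMap A * T J B)
      + Θ₅ J (U J A * toBlocks₂₂LinearMap B) + Θ₆ (T J A * U J B) + Θ₇ (S J A * Q J B) := by
  rw [← fromBlocks_toBlocks A, ← fromBlocks_toBlocks B]
  simp only [P, Q, S, T, U, Θ₁, Θ₂, Θ₃, Θ₄, Θ₅, Θ₆, Θ₇, fromBlocksLinearMap_apply,
    LinearMap.add_apply, LinearMap.sub_apply, LinearMap.neg_apply, LinearMap.comp_apply,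
    LinearMap.id_apply, LinearMap.zero_apply, mulLeftLinearMap_apply, mulRightLinearMap_apply,
    toBlocks₁₁LinearMap_apply, toBlocks₁₂LinearMap_apply, toBlocks₂₁LinearMap_apply,
    toBlocks₂₂LinearMap_apply, toBlocks_fromBlocks₁₁, toBlocks_fromBlocks₁₂,
    toBlocks_fromBlocks₂₁, toBlocks_fromBlocks₂₂, fromBlocks_multiply, fromBlocks_add,
    fromBlocks_inj]
  have cancel₁ (X : Matrix β α R) : Jᵀ * (J * X) = X := by
    rw [← Matrix.mul_assoc, hJ, Matrix.one_mul]
  have cancel₂ (X : Matrix β β R) : Jᵀ * (J * X) = X := by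
    rw [← Matrix.mul_assoc, hJ, Matrix.one_mul]
  refine ⟨?_, ?_, ?_, ?_⟩ <;>
  · simp only [Matrix.mul_add, Matrix.add_mul, Matrix.mul_sub, Matrix.sub_mul, Matrix.mul_neg,
      Matrix.neg_mul, Matrix.mul_assoc, cancel₁, cancel₂, hJ, Matrix.mul_one]
    abel

end DivideAndConquer

open DivideAndConquer in
theorem bilinearAlgorithm_divide_and_conquer_general (R : Type*) [CommRing R]
    (u v a b c : ℕ) (huv : v < u)
    (ha : BilinearAlgorithm R u u u a)
    (hb : BilinearAlgorithm R u u v b)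
    (hc : BilinearAlgorithm R v v u c) :
    BilinearAlgorithm R (u + v) (u + v) (u + v) (a + 3 * b + 3 * c) := by
  rw [bilinearAlgorithm_iff] at ha hb hc ⊢
  obtain ⟨J, hJ⟩ := exists_transpose_mul_eq_one (R := R) (Fin.castLEEmb huv.le)
  have hb_uvu := hb.matrixMul_rotate
  have hb_vuu := hb_uvu.matrixMul_rotate
  have hc_vuv := hc.matrixMul_rotate
  have hc_uvv := hc_vuv.matrixMul_rotate
  have hsum := ((((((ha.comp (P J) (P J) (Θ₁ J)).add
    (hb_vuu.comp (Q J) toBlocks₁₁LinearMap (Θ₂ J))).add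
    (hb.comp toBlocks₁₁LinearMap (S J) (Θ₃ J))).add
    (hc.comp toBlocks₂₂LinearMap (T J) (Θ₄ J))).add
    (hc_uvv.comp (U J) toBlocks₂₂LinearMap (Θ₅ J))).add
    (hc_vuv.comp (T J) (U J) Θ₆)).add
    (hb_uvu.comp (S J) (Q J) Θ₇)
  exact ((hsum.congr (mul_eq_sum_sevenProducts hJ)).matrixMul_reindex finSumFinEquiv finSumFinEquiv
    finSumFinEquiv).equiv (Fintype.equivFinOfCardEq (by simp; ring)).symm

/-- Proposition 1 (divide-and-conquer bound):
⟨u+v,u+v,u+v⟩ ≤ ⟨u,u,u⟩ + 3⟨u,u,v⟩ + 3⟨v,v,u⟩ when `u > v`. -/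
theorem bilinearAlgorithm_divide_and_conquer (R : Type*) [CommRing R]
    (u v a b c : ℕ) (hv : 0 < v) (huv : v < u)
    (ha : BilinearAlgorithm R u u u a)
    (hb : BilinearAlgorithm R u u v b)
    (hc : BilinearAlgorithm R v v u c) :
    BilinearAlgorithm R (u + v) (u + v) (u + v) (a + 3 * b + 3 * c) :=
  bilinearAlgorithm_divide_and_conquer_general R u v a b c huv ha hb hc
end

section
/- For any commutative ring R over which 3×3 by 3×6 matrix multiplication admits a bilinear algorithm with 40 multiplications, 9×9 by 9×9 matrix multiplication over R admits a bilinear algorithm with 520 multiplications, since ⟨9,9,9⟩ ≤ ⟨6,6,6⟩ + 3⟨6,6,3⟩ + 3⟨6,3,3⟩ ≤ 160 + 3·80 + 3·40 = 520. -/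
namespace BilinearAux

variable {R : Type*} [CommRing R]

/-- A bilinear map computable with `r` multiplications. -/
def BilComp (R : Type*) [CommRing R] (u v w r : ℕ)
    (φ : Matrix (Fin u) (Fin v) R → Matrix (Fin v) (Fin w) R → Matrix (Fin u) (Fin w) R) :
    Prop :=
  ∃ (f : Fin r → (Matrix (Fin u) (Fin v) R →ₗ[R] R))
    (g : Fin r → (Matrix (Fin v) (Fin w) R →ₗ[R] R))
    (C : Fin r → Matrix (Fin u) (Fin w) R),
    ∀ A B, φ A B = ∑ i, (f i A * g i B) • C i

lemma BilComp.add {u v w r s : ℕ} {φ ψ}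
    (hφ : BilComp R u v w r φ) (hψ : BilComp R u v w s ψ) :
    BilComp R u v w (r + s) (fun A B => φ A B + ψ A B) := by
  obtain ⟨f, g, C, hf⟩ := hφ
  obtain ⟨f', g', C', hf'⟩ := hψ
  refine ⟨Fin.addCases f f', Fin.addCases g g', Fin.addCases C C', fun A B => ?_⟩
  show φ A B + ψ A B = _
  rw [hf A B, hf' A B, Fin.sum_univ_add]
  simp

lemma BilComp.congr {u v w r : ℕ} {φ ψ}
    (hφ : BilComp R u v w r φ) (h : ∀ A B, φ A B = ψ A B) :
    BilComp R u v w r ψ := by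
  obtain ⟨f, g, C, hf⟩ := hφ
  exact ⟨f, g, C, fun A B => (h A B) ▸ hf A B⟩

lemma BilComp.cast {u v w r r' : ℕ} {φ} (h : BilComp R u v w r φ) (hr : r = r') :
    BilComp R u v w r' φ := hr ▸ h

/-- trace-pairing functional `D ↦ ∑ p q, C p q * D q p` -/
def traceDual {u w : ℕ} (C : Matrix (Fin u) (Fin w) R) :
    Matrix (Fin w) (Fin u) R →ₗ[R] R where
  toFun D := ∑ p, ∑ q, C p q * D q p
  map_add' D E := by
    simp [Matrix.add_apply, mul_add, Finset.sum_add_distrib]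
  map_smul' c D := by
    simp only [Matrix.smul_apply, smul_eq_mul, RingHom.id_apply, Finset.mul_sum]
    refine Finset.sum_congr rfl fun p _ => Finset.sum_congr rfl fun q _ => ?_
    ring

/-- Cyclic symmetry of matrix-multiplication tensor rank. -/
lemma cyclic {u v w r : ℕ} (h : BilinearAlgorithm R u v w r) :
    BilinearAlgorithm R v w u r := by
  obtain ⟨f, g, C, hf⟩ := h
  refine ⟨g, fun i => traceDual (C i),
    fun i => Matrix.of fun k l => f i (Matrix.single l k 1), fun B D => ?_⟩
  ext k l
  have key := hf (Matrix.single l k 1) B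
  have h2 : ∑ p, ∑ q, (Matrix.single l k (1 : R) * B) p q * D q p
      = ∑ p, ∑ q, (∑ i, (f i (Matrix.single l k 1) * g i B) • C i) p q * D q p := by
    rw [key]
  have hL : ∑ p, ∑ q, (Matrix.single l k (1 : R) * B) p q * D q p
      = (B * D) k l := by
    rw [Finset.sum_comm]
    simp only [Matrix.mul_apply, Matrix.single, Matrix.of_apply, ite_and]
    simp [Finset.sum_ite_eq, Finset.sum_ite_eq']
  have hR : ∑ p, ∑ q, (∑ i, (f i (Matrix.single l k 1) * g i B) • C i) p q * D q p
      = ∑ i, (f i (Matrix.single l k 1) * g i B) * ∑ p, ∑ q, C i p q * D q p := by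
    simp only [Matrix.sum_apply, Matrix.smul_apply, smul_eq_mul, Finset.sum_mul,
      Finset.mul_sum, mul_assoc]
    exact Eq.trans (Finset.sum_congr rfl fun p _ => Finset.sum_comm) Finset.sum_comm
  rw [← hL, h2, hR]
  simp only [Matrix.sum_apply, Matrix.smul_apply, smul_eq_mul, traceDual,
    LinearMap.coe_mk, AddHom.coe_mk, Matrix.of_apply]
  refine Finset.sum_congr rfl fun i _ => ?_
  ring



variable {R : Type*} [CommRing R]

abbrev M33 (R : Type*) [CommRing R] := Matrix (Fin 3) (Fin 3) R
abbrev M99 (R : Type*) [CommRing R] := Matrix (Fin 9) (Fin 9) R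

def bidx (r i : Fin 3) : Fin 9 := ⟨3 * r.val + i.val, by omega⟩

/-- extract 3×3 block -/
def ext3 (r s : Fin 3) : M99 R →ₗ[R] M33 R where
  toFun A := Matrix.of fun i j => A (bidx r i) (bidx s j)
  map_add' A B := by ext i j; simp
  map_smul' c A := by ext i j; simp

/-- embed 3×3 block -/
def emb3 (r s : Fin 3) : M33 R →ₗ[R] M99 R where
  toFun Z := Matrix.of fun p q =>
    if p.val / 3 = r.val ∧ q.val / 3 = s.val then
      Z ⟨p.val % 3, Nat.mod_lt _ (by norm_num)⟩ ⟨q.val % 3, Nat.mod_lt _ (by norm_num)⟩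
    else 0
  map_add' A B := by
    ext p q
    by_cases h : p.val / 3 = r.val ∧ q.val / 3 = s.val <;> simp [h]
  map_smul' c A := by
    ext p q
    by_cases h : p.val / 3 = r.val ∧ q.val / 3 = s.val <;> simp [h]

lemma ext3_emb3 (r s r' s' : Fin 3) (Z : M33 R) :
    ext3 r s (emb3 r' s' Z) = if r = r' ∧ s = s' then Z else 0 := by
  by_cases h : r = r' ∧ s = s'
  · obtain ⟨rfl, rfl⟩ := h
    simp only [if_pos (⟨rfl, rfl⟩ : r = r ∧ s = s)]
    ext i j
    have h1 : (bidx r i).val / 3 = r.val := by simp [bidx]; omega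
    have h2 : (bidx s j).val / 3 = s.val := by simp [bidx]; omega
    have h3 : (bidx r i).val % 3 = i.val := by simp [bidx]
    have h4 : (bidx s j).val % 3 = j.val := by simp [bidx]
    simp [ext3, emb3, h1, h2, h3, h4]
  · rw [if_neg h]
    ext i j
    have h1 : (bidx r i).val / 3 = r.val := by simp [bidx]; omega
    have h2 : (bidx s j).val / 3 = s.val := by simp [bidx]; omega
    have : ¬((bidx r i).val / 3 = r'.val ∧ (bidx s j).val / 3 = s'.val) := by
      rw [h1, h2]
      intro ⟨ha, hb⟩
      exact h ⟨Fin.ext ha, Fin.ext hb⟩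
    simp [ext3, emb3, this]

lemma blocks_ext {X Y : M99 R} (h : ∀ r s, ext3 r s X = ext3 r s Y) : X = Y := by
  ext p q
  have hp : p.val / 3 < 3 := by omega
  have hq : q.val / 3 < 3 := by omega
  have hp2 : p.val % 3 < 3 := Nat.mod_lt _ (by norm_num)
  have hq2 : q.val % 3 < 3 := Nat.mod_lt _ (by norm_num)
  have h2 := congrFun (congrFun (congrArg (fun M => (M : M33 R)) (h ⟨p.val / 3, hp⟩ ⟨q.val / 3, hq⟩))
    ⟨p.val % 3, hp2⟩) ⟨q.val % 3, hq2⟩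
  have hbp : bidx ⟨p.val / 3, hp⟩ ⟨p.val % 3, hp2⟩ = p := by
    apply Fin.ext; simp [bidx]; omega
  have hbq : bidx ⟨q.val / 3, hq⟩ ⟨q.val % 3, hq2⟩ = q := by
    apply Fin.ext; simp [bidx]; omega
  simpa [ext3, hbp, hbq] using h2

lemma ext3_mul (r s : Fin 3) (A B : M99 R) :
    ext3 r s (A * B) = ∑ t, ext3 r t A * ext3 t s B := by
  ext i j
  simp only [ext3, Matrix.of_apply, LinearMap.coe_mk, AddHom.coe_mk, Matrix.mul_apply,
    Matrix.sum_apply]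
  have hbij : Function.Bijective (fun p : Fin 3 × Fin 3 => bidx p.1 p.2) := by
    rw [Fintype.bijective_iff_injective_and_card]
    constructor
    · intro ⟨t, k⟩ ⟨t', k'⟩ hp
      have := congrArg Fin.val hp
      simp [bidx] at this
      have h1 : t.val = t'.val ∧ k.val = k'.val := by omega
      exact Prod.ext (Fin.ext h1.1) (Fin.ext h1.2)
    · simp
  rw [← Fintype.sum_bijective _ hbij _ (fun p => A (bidx r i) p * B p (bidx s j)) (fun _ => rfl)]
  exact Fintype.sum_prod_type (f := fun p : Fin 3 × Fin 3 => A (bidx r i) (bidx p.1 p.2) * B (bidx p.1 p.2) (bidx s j))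



variable {R : Type*} [CommRing R]

abbrev M33' (R : Type*) [CommRing R] := Matrix (Fin 3) (Fin 3) R

/-- glue two 3×3 matrices side by side into a 3×6 matrix -/
def glueC (Y1 Y2 : Matrix (Fin 3) (Fin 3) R) : Matrix (Fin 3) (Fin 6) R :=
  Matrix.of fun i j =>
    if h : (j : ℕ) < 3 then Y1 i ⟨j, h⟩ else Y2 i ⟨(j : ℕ) - 3, by omega⟩

/-- glue two 3×3 matrices on top of each other into a 6×3 matrix -/
def glueR (X1 X2 : Matrix (Fin 3) (Fin 3) R) : Matrix (Fin 6) (Fin 3) R :=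
  Matrix.of fun i j =>
    if h : (i : ℕ) < 3 then X1 ⟨i, h⟩ j else X2 ⟨(i : ℕ) - 3, by omega⟩ j

def col1 : Matrix (Fin 3) (Fin 6) R →ₗ[R] Matrix (Fin 3) (Fin 3) R where
  toFun Z := Matrix.of fun i j => Z i ⟨j, by omega⟩
  map_add' _ _ := by ext i j; simp
  map_smul' _ _ := by ext i j; simp

def col2 : Matrix (Fin 3) (Fin 6) R →ₗ[R] Matrix (Fin 3) (Fin 3) R where
  toFun Z := Matrix.of fun i j => Z i ⟨(j : ℕ) + 3, by omega⟩
  map_add' _ _ := by ext i j; simp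
  map_smul' _ _ := by ext i j; simp

def row1 : Matrix (Fin 6) (Fin 3) R →ₗ[R] Matrix (Fin 3) (Fin 3) R where
  toFun Z := Matrix.of fun i j => Z ⟨i, by omega⟩ j
  map_add' _ _ := by ext i j; simp
  map_smul' _ _ := by ext i j; simp

def row2 : Matrix (Fin 6) (Fin 3) R →ₗ[R] Matrix (Fin 3) (Fin 3) R where
  toFun Z := Matrix.of fun i j => Z ⟨(i : ℕ) + 3, by omega⟩ j
  map_add' _ _ := by ext i j; simp
  map_smul' _ _ := by ext i j; simp

lemma col1_glueC (Y1 Y2 : Matrix (Fin 3) (Fin 3) R) : col1 (glueC Y1 Y2) = Y1 := by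
  ext i j
  have h : ((⟨(j : ℕ), by omega⟩ : Fin 6) : ℕ) < 3 := by simpa using j.isLt
  simp [col1, glueC, h]

lemma col2_glueC (Y1 Y2 : Matrix (Fin 3) (Fin 3) R) : col2 (glueC Y1 Y2) = Y2 := by
  ext i j
  have h : ¬ ((⟨(j : ℕ) + 3, by omega⟩ : Fin 6) : ℕ) < 3 := by simp
  simp [col2, glueC, h]

lemma row1_glueR (Y1 Y2 : Matrix (Fin 3) (Fin 3) R) : row1 (glueR Y1 Y2) = Y1 := by
  ext i j
  have h : ((⟨(i : ℕ), by omega⟩ : Fin 6) : ℕ) < 3 := by simpa using i.isLt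
  simp [row1, glueR, h]

lemma row2_glueR (Y1 Y2 : Matrix (Fin 3) (Fin 3) R) : row2 (glueR Y1 Y2) = Y2 := by
  ext i j
  have h : ¬ ((⟨(i : ℕ) + 3, by omega⟩ : Fin 6) : ℕ) < 3 := by simp
  simp [row2, glueR, h]

lemma mul_glueC (X Y1 Y2 : Matrix (Fin 3) (Fin 3) R) :
    X * glueC Y1 Y2 = glueC (X * Y1) (X * Y2) := by
  ext i j
  by_cases h : (j : ℕ) < 3 <;>
    simp [glueC, Matrix.mul_apply, h]

lemma glueR_mul (X1 X2 Y : Matrix (Fin 3) (Fin 3) R) :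
    glueR X1 X2 * Y = glueR (X1 * Y) (X2 * Y) := by
  ext i j
  by_cases h : (i : ℕ) < 3 <;>
    simp [glueR, Matrix.mul_apply, h]

lemma glueC_mul_glueR (X1 X2 Y1 Y2 : Matrix (Fin 3) (Fin 3) R) :
    glueC X1 X2 * glueR Y1 Y2 = X1 * Y1 + X2 * Y2 := by
  ext i j
  simp only [Matrix.mul_apply, Matrix.add_apply]
  rw [show (Finset.univ : Finset (Fin 6)) = (Finset.univ : Finset (Fin (3 + 3))) from rfl,
    Fin.sum_univ_add]
  refine congrArg₂ (· + ·) ?_ ?_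
  · refine Finset.sum_congr rfl fun k _ => ?_
    have h1 : ((Fin.castAdd 3 k : Fin 6) : ℕ) < 3 := by simpa using k.isLt
    simp [glueC, glueR, h1]
  · refine Finset.sum_congr rfl fun k _ => ?_
    have h1 : ¬ ((Fin.natAdd 3 k : Fin 6) : ℕ) < 3 := by simp
    simp [glueC, glueR, h1]


-- CALL LEMMAS (to be inserted inside namespace)

lemma fin3_mk0 (h : (0:ℕ) < 3) : (⟨0, h⟩ : Fin 3) = 0 := rfl
lemma fin3_mk1 (h : (1:ℕ) < 3) : (⟨1, h⟩ : Fin 3) = 1 := rfl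
lemma fin3_mk2 (h : (2:ℕ) < 3) : (⟨2, h⟩ : Fin 3) = 2 := rfl

/-- glued linear map into 3×6 -/
def glueCL (F G : M99 R →ₗ[R] M33 R) : M99 R →ₗ[R] Matrix (Fin 3) (Fin 6) R where
  toFun B := glueC (F B) (G B)
  map_add' B B' := by
    ext i j
    by_cases h : (j : ℕ) < 3 <;> simp [glueC, h]
  map_smul' c B := by
    ext i j
    by_cases h : (j : ℕ) < 3 <;> simp [glueC, h]

def glueRL (F G : M99 R →ₗ[R] M33 R) : M99 R →ₗ[R] Matrix (Fin 6) (Fin 3) R where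
  toFun B := glueR (F B) (G B)
  map_add' B B' := by
    ext i j
    by_cases h : (i : ℕ) < 3 <;> simp [glueR, h]
  map_smul' c B := by
    ext i j
    by_cases h : (i : ℕ) < 3 <;> simp [glueR, h]

/-- one ⟨3,3,6⟩ oracle call: two products sharing the left factor -/
lemma callF (h : BilinearAlgorithm R 3 3 6 40)
    (L R1 R2 : M99 R →ₗ[R] M33 R) (P1 P2 : M33 R →ₗ[R] M99 R) :
    BilComp R 9 9 9 40 (fun A B => P1 (L A * R1 B) + P2 (L A * R2 B)) := by
  obtain ⟨f, g, C, hc⟩ := h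
  refine ⟨fun i => (f i).comp L, fun i => (g i).comp (glueCL R1 R2),
    fun i => P1 (col1 (C i)) + P2 (col2 (C i)), fun A B => ?_⟩
  show P1 (L A * R1 B) + P2 (L A * R2 B) = _
  have key := hc (L A) (glueC (R1 B) (R2 B))
  have k1 : L A * R1 B = col1 (R := R) (L A * glueC (R1 B) (R2 B)) := by
    rw [mul_glueC, col1_glueC]
  have k2 : L A * R2 B = col2 (R := R) (L A * glueC (R1 B) (R2 B)) := by
    rw [mul_glueC, col2_glueC]
  rw [k1, k2, key, map_sum, map_sum, map_sum, map_sum, ← Finset.sum_add_distrib]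
  refine Finset.sum_congr rfl fun i _ => ?_
  simp only [LinearMap.comp_apply, glueCL, LinearMap.coe_mk, AddHom.coe_mk, map_smul,
    smul_add]

/-- one ⟨6,3,3⟩ oracle call: two products sharing the right factor -/
lemma callG (h : BilinearAlgorithm R 6 3 3 40)
    (L1 L2 Rg : M99 R →ₗ[R] M33 R) (P1 P2 : M33 R →ₗ[R] M99 R) :
    BilComp R 9 9 9 40 (fun A B => P1 (L1 A * Rg B) + P2 (L2 A * Rg B)) := by
  obtain ⟨f, g, C, hc⟩ := h
  refine ⟨fun i => (f i).comp (glueRL L1 L2), fun i => (g i).comp Rg,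
    fun i => P1 (row1 (C i)) + P2 (row2 (C i)), fun A B => ?_⟩
  show P1 (L1 A * Rg B) + P2 (L2 A * Rg B) = _
  have key := hc (glueR (L1 A) (L2 A)) (Rg B)
  have k1 : L1 A * Rg B = row1 (R := R) (glueR (L1 A) (L2 A) * Rg B) := by
    rw [glueR_mul, row1_glueR]
  have k2 : L2 A * Rg B = row2 (R := R) (glueR (L1 A) (L2 A) * Rg B) := by
    rw [glueR_mul, row2_glueR]
  rw [k1, k2, key, map_sum, map_sum, map_sum, map_sum, ← Finset.sum_add_distrib]
  refine Finset.sum_congr rfl fun i _ => ?_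
  simp only [LinearMap.comp_apply, glueRL, LinearMap.coe_mk, AddHom.coe_mk, map_smul,
    smul_add]

/-- one ⟨3,6,3⟩ oracle call: sum of two products -/
lemma callS (h : BilinearAlgorithm R 3 6 3 40)
    (L1 L2 R1 R2 : M99 R →ₗ[R] M33 R) (P : M33 R →ₗ[R] M99 R) :
    BilComp R 9 9 9 40 (fun A B => P (L1 A * R1 B + L2 A * R2 B)) := by
  obtain ⟨f, g, C, hc⟩ := h
  refine ⟨fun i => (f i).comp (glueCL L1 L2), fun i => (g i).comp (glueRL R1 R2),
    fun i => P (C i), fun A B => ?_⟩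
  show P (L1 A * R1 B + L2 A * R2 B) = _
  have key := hc (glueC (L1 A) (L2 A)) (glueR (R1 B) (R2 B))
  rw [glueC_mul_glueR] at key
  rw [key, map_sum]
  refine Finset.sum_congr rfl fun i _ => ?_
  simp only [LinearMap.comp_apply, glueCL, glueRL, LinearMap.coe_mk, AddHom.coe_mk, map_smul]

end BilinearAux

/-- For any commutative ring over which 3×3 by 3×6 matrix multiplication admits
a bilinear algorithm with 40 multiplications, 9×9 by 9×9 matrix multiplication
admits a bilinear algorithm with 520 multiplications. -/
theorem bilinearAlgorithm_nine_520_of_336 (R : Type*) [CommRing R]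
    (h : BilinearAlgorithm R 3 3 6 40) : BilinearAlgorithm R 9 9 9 520 := by
  have h363 : BilinearAlgorithm R 3 6 3 40 := BilinearAux.cyclic h
  have h633 : BilinearAlgorithm R 6 3 3 40 := BilinearAux.cyclic h363
  have c1 := BilinearAux.callF h (BilinearAux.ext3 0 0 + BilinearAux.ext3 1 1) (BilinearAux.ext3 0 0 + BilinearAux.ext3 1 1) (BilinearAux.ext3 0 2)
      (BilinearAux.emb3 0 0 + BilinearAux.emb3 1 1) (BilinearAux.emb3 0 2)
  have c2 := BilinearAux.callF h (BilinearAux.ext3 1 0 + BilinearAux.ext3 1 1) (BilinearAux.ext3 0 0) (BilinearAux.ext3 0 2)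
      (BilinearAux.emb3 1 0 - BilinearAux.emb3 1 1) (BilinearAux.emb3 1 2)
  have c3 := BilinearAux.callF h (BilinearAux.ext3 0 1 - BilinearAux.ext3 1 1) (BilinearAux.ext3 1 0 + BilinearAux.ext3 1 1) (BilinearAux.ext3 1 2)
      (BilinearAux.emb3 0 0) (BilinearAux.emb3 0 2)
  have c4 := BilinearAux.callF h (BilinearAux.ext3 1 1) (BilinearAux.ext3 1 0 - BilinearAux.ext3 0 0) (BilinearAux.ext3 1 2 - BilinearAux.ext3 0 2)
      (BilinearAux.emb3 0 0 + BilinearAux.emb3 1 0) (BilinearAux.emb3 0 2 + BilinearAux.emb3 1 2)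
  have c5 := BilinearAux.callG h633 (BilinearAux.ext3 0 0) (BilinearAux.ext3 2 0) (BilinearAux.ext3 0 1 - BilinearAux.ext3 1 1)
      (BilinearAux.emb3 0 1 + BilinearAux.emb3 1 1) (BilinearAux.emb3 2 1)
  have c6 := BilinearAux.callG h633 (BilinearAux.ext3 0 0 + BilinearAux.ext3 0 1) (BilinearAux.ext3 2 0 + BilinearAux.ext3 2 1) (BilinearAux.ext3 1 1)
      (BilinearAux.emb3 0 1 - BilinearAux.emb3 0 0) (BilinearAux.emb3 2 1)
  have c7 := BilinearAux.callS h363 (BilinearAux.ext3 1 0 - BilinearAux.ext3 0 0) (BilinearAux.ext3 1 2) (BilinearAux.ext3 0 0 + BilinearAux.ext3 0 1) (BilinearAux.ext3 2 1)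
      (BilinearAux.emb3 1 1)
  have c8 := BilinearAux.callF h (BilinearAux.ext3 0 2) (BilinearAux.ext3 2 0) (BilinearAux.ext3 2 1) (BilinearAux.emb3 0 0) (BilinearAux.emb3 0 1)
  have c9 := BilinearAux.callF h (BilinearAux.ext3 1 2) (BilinearAux.ext3 2 0) (BilinearAux.ext3 2 2) (BilinearAux.emb3 1 0) (BilinearAux.emb3 1 2)
  have c10 := BilinearAux.callG h633 (BilinearAux.ext3 0 2) (BilinearAux.ext3 2 2) (BilinearAux.ext3 2 2) (BilinearAux.emb3 0 2) (BilinearAux.emb3 2 2)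
  have c11 := BilinearAux.callS h363 (BilinearAux.ext3 2 0) (BilinearAux.ext3 2 1) (BilinearAux.ext3 0 2) (BilinearAux.ext3 1 2) (BilinearAux.emb3 2 2)
  have c12 := BilinearAux.callS h363 (BilinearAux.ext3 2 0) (BilinearAux.ext3 2 1) (BilinearAux.ext3 0 0) (BilinearAux.ext3 1 0) (BilinearAux.emb3 2 0)
  have c13 := BilinearAux.callF h (BilinearAux.ext3 2 2) (BilinearAux.ext3 2 0) (BilinearAux.ext3 2 1) (BilinearAux.emb3 2 0) (BilinearAux.emb3 2 1)
  have hsum := (((((((((((c1.add c2).add c3).add c4).add c5).add c6).add c7).add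
      c8).add c9).add c10).add c11).add c12).add c13
  have hfinal : BilinearAux.BilComp R 9 9 9 520 (fun A B => A * B) := by
    refine (hsum.cast (by norm_num)).congr fun A B => ?_
    apply BilinearAux.blocks_ext
    intro r s
    rw [BilinearAux.ext3_mul]
    fin_cases r <;> fin_cases s <;>
      (simp only [BilinearAux.fin3_mk0, BilinearAux.fin3_mk1, BilinearAux.fin3_mk2, LinearMap.add_apply, LinearMap.sub_apply,
        map_add, map_sub, BilinearAux.ext3_emb3, Fin.sum_univ_three, Fin.isValue,
        Fin.ext_iff] <;> norm_num <;> (first | noncomm_ring | abel))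
  obtain ⟨f, g, C, hf⟩ := hfinal
  exact ⟨f, g, C, fun A B => hf A B⟩
end
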